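/- arXiv:1410.1697 — 3 statements merged into one kernel-verified Lean document; each statement's English description precedes it below -/
import Mathlib

section
/- Let A be a commutative unital complex Banach algebra with a maximal ideal M algebraically generated by t_1,…,t_k, with dim_ℂ(cl(M^n)/cl(M^{n+1})) = C(n+k−1,n) for every n ≥ 1, and let φ be a character of A with ker φ = M. Then for every x ∈ ⋂_{n≥1} cl(M^n) there is a neighbourhood U of φ in the character space M(A) (Gelfand topology) such that ψ(x) = 0 for all ψ ∈ U, i.e., the Gelfand transform x̂ vanishes on a neighbourhood of φ. -/
/-- The closure of the `n`-th power of an ideal, viewed as a `ℂ`-submodule. -/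
def idealPowClosure {A : Type*} [CommRing A] [Algebra ℂ A] [TopologicalSpace A]
    [ContinuousAdd A] [ContinuousConstSMul ℂ A] (M : Ideal A) (n : ℕ) : Submodule ℂ A :=
  ((M ^ n).restrictScalars ℂ).topologicalClosure

/-!
By the open mapping theorem every `z ∈ M` can be written `z = ∑ tᵢ aᵢ` with `‖aᵢ‖ ≤ C ‖z‖`.
Applying this repeatedly to `x`, and each time replacing `aᵢ` by `aᵢ - φ(aᵢ)·1`, writes
`x = ∑_{|w| = N} t^w E_w` over words `w` of length `N`, with `‖E_w‖ ≤ B^N ‖x‖`. The degree-`N`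
monomials span `cl(Mᴺ)/cl(Mᴺ⁺¹)` and there are at most `C(N+k-1, N)` of them, so the dimension
hypothesis makes them independent modulo `cl(Mᴺ⁺¹)`; since `x ∈ cl(Mᴺ⁺¹)`, the scalar parts
`φ(aᵢ)` discarded at each step sum to zero. Hence `|ψ(x)| ≤ ‖ψ‖ ‖x‖ (k r B)^N` whenever all
`|ψ(tᵢ)| < r`, and for `r < 1/(kB)` this forces `ψ(x) = 0`.
-/

open Set Submodule Filter Topology Pointwise

section Monomials

variable {R : Type*} [CommRing R] {k : ℕ}

def wordMonomial {n : ℕ} (t : Fin k → R) (w : Fin n → Fin k) : R :=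
  ∏ i, t (w i)

theorem wordMonomial_cons {n : ℕ} (t : Fin k → R) (i : Fin k) (w : Fin n → Fin k) :
    wordMonomial t (Fin.cons i w : Fin (n + 1) → Fin k) = t i * wordMonomial t w := by
  simp [wordMonomial, Fin.prod_univ_succ]

theorem wordMonomial_mem_pow {n : ℕ} {t : Fin k → R} {M : Ideal R} (ht : ∀ i, t i ∈ M)
    (w : Fin n → Fin k) : wordMonomial t w ∈ M ^ n := by
  simpa [wordMonomial] using
    Ideal.prod_mem_prod (s := Finset.univ) (I := fun _ => M) fun i _ => ht (w i)

theorem Ideal.span_range_pow_le_span_wordMonomial (t : Fin k → R) (n : ℕ) :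
    Ideal.span (range t) ^ n ≤ Ideal.span (range (wordMonomial t : (Fin n → Fin k) → R)) := by
  induction n with
  | zero =>
    rw [pow_zero, Ideal.one_eq_top, top_le_iff, Ideal.eq_top_iff_one]
    exact Ideal.subset_span ⟨Fin.elim0, by simp [wordMonomial]⟩
  | succ n ih =>
    calc Ideal.span (range t) ^ (n + 1)
        ≤ Ideal.span (range t) * Ideal.span (range (wordMonomial t)) := by
          rw [pow_succ']
          exact Ideal.mul_mono_right ih
      _ = Ideal.span (range t * range (wordMonomial t)) := Ideal.span_mul_span' _ _
      _ ≤ _ := by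
          refine Ideal.span_mono ?_
          rintro _ ⟨_, ⟨i, rfl⟩, _, ⟨w, rfl⟩, rfl⟩
          exact ⟨Fin.cons i w, wordMonomial_cons t i w⟩

theorem sum_wordMonomial_mul_eq_of_eq_sum_mul {N : ℕ} (t : Fin k → R)
    (E : (Fin N → Fin k) → R) (g : (Fin N → Fin k) → Fin k → R)
    (hg : ∀ w, E w = ∑ i, t i * g w i) :
    ∑ w, wordMonomial t w * E w =
      ∑ w : Fin (N + 1) → Fin k, wordMonomial t w * g (Fin.tail w) (w 0) := by
  rw [← (Fin.consEquiv fun _ => Fin k).sum_comp, Fintype.sum_prod_type, Finset.sum_comm]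
  refine Finset.sum_congr rfl fun w _ => ?_
  simp [Fin.consEquiv, hg, Finset.mul_sum, wordMonomial_cons, mul_left_comm, mul_assoc]

theorem finrank_span_wordMonomial_le_choose (𝕜 : Type*) [Field 𝕜] [Algebra 𝕜 R]
    (t : Fin k → R) (n : ℕ) :
    Module.finrank 𝕜 (span 𝕜 (range (wordMonomial t : (Fin n → Fin k) → R))) ≤
      (n + k - 1).choose n := by
  let symMonomial : Sym (Fin k) n → R := fun σ => (σ.1.map t).prod
  have hle : span 𝕜 (range (wordMonomial t : (Fin n → Fin k) → R)) ≤
      span 𝕜 (range symMonomial) := by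
    refine span_mono (range_subset_iff.2 fun w => ⟨⟨Finset.univ.val.map w, by simp⟩, ?_⟩)
    simp [symMonomial, wordMonomial, Finset.prod_eq_multiset_prod]
    rfl
  have : FiniteDimensional 𝕜 (span 𝕜 (range symMonomial)) :=
    FiniteDimensional.span_of_finite 𝕜 (finite_range _)
  calc _ ≤ Module.finrank 𝕜 (span 𝕜 (range symMonomial)) := Submodule.finrank_mono hle
    _ ≤ Fintype.card (Sym (Fin k) n) := finrank_range_le_card _
    _ = (n + k - 1).choose n := by rw [Sym.card_sym_eq_choose, Fintype.card_fin, add_comm k]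

theorem pow_le_pow_succ_sup_span_wordMonomial {𝕜 : Type*} [CommRing 𝕜] [Algebra 𝕜 R]
    (φ : R →ₐ[𝕜] 𝕜) {t : Fin k → R} {M : Ideal R} (hφ : ∀ a, φ a = 0 ↔ a ∈ M)
    (hgen : M = Ideal.span (range t)) (n : ℕ) :
    (M ^ n).restrictScalars 𝕜 ≤
      (M ^ (n + 1)).restrictScalars 𝕜 ⊔ span 𝕜 (range (wordMonomial t : (Fin n → Fin k) → R)) := by
  intro y hy
  have ht : ∀ i, t i ∈ M := fun i => hgen ▸ Ideal.subset_span ⟨i, rfl⟩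
  rw [restrictScalars_mem, hgen] at hy
  obtain ⟨c, rfl⟩ :=
    Ideal.mem_span_range_iff_exists_fun.1 (Ideal.span_range_pow_le_span_wordMonomial t n hy)
  refine sum_mem fun w _ => ?_
  have hc : c w - algebraMap 𝕜 R (φ (c w)) ∈ M := by simp [← hφ]
  have hsplit : c w * wordMonomial t w =
      (c w - algebraMap 𝕜 R (φ (c w))) * wordMonomial t w + φ (c w) • wordMonomial t w := by
    rw [Algebra.smul_def]
    ring
  rw [hsplit]
  refine add_mem_sup ?_ (smul_mem _ _ (subset_span ⟨w, rfl⟩))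
  rw [restrictScalars_mem, pow_succ']
  exact Ideal.mul_mem_mul hc (wordMonomial_mem_pow ht w)

end Monomials

theorem Ideal.exists_eq_sum_mul_norm_le_of_isClosed {𝕜 A : Type*} [NontriviallyNormedField 𝕜]
    [NormedCommRing A] [NormedAlgebra 𝕜 A] [CompleteSpace A] {k : ℕ} {t : Fin k → A}
    (hclosed : IsClosed (Ideal.span (range t) : Set A)) :
    ∃ C > 0, ∀ z ∈ Ideal.span (range t), ∃ a : Fin k → A,
      z = ∑ i, t i * a i ∧ ∀ i, ‖a i‖ ≤ C * ‖z‖ := by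
  let K : Submodule 𝕜 A := (Ideal.span (range t)).restrictScalars 𝕜
  have : CompleteSpace K := hclosed.completeSpace_coe
  let T : (Fin k → A) →L[𝕜] A :=
    ∑ i, (ContinuousLinearMap.mul 𝕜 A (t i)).comp (ContinuousLinearMap.proj i)
  have hT : ∀ a, T a = ∑ i, t i * a i := fun a => by simp [T]
  have hTK : ∀ a, T a ∈ K := fun a => by
    rw [hT]
    exact Submodule.sum_mem _ fun i _ => Ideal.mul_mem_right _ _ (Ideal.subset_span ⟨i, rfl⟩)
  have hsurj : Function.Surjective (T.codRestrict K hTK) := by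
    rintro ⟨z, hz⟩
    obtain ⟨a, ha⟩ := Ideal.mem_span_range_iff_exists_fun.1 hz
    exact ⟨a, Subtype.ext <| by simp [hT, ← ha, mul_comm]⟩
  obtain ⟨C, hC0, hC⟩ := (T.codRestrict K hTK).exists_preimage_norm_le hsurj
  refine ⟨C, hC0, fun z hz => ?_⟩
  obtain ⟨a, ha, hanorm⟩ := hC ⟨z, hz⟩
  refine ⟨a, ?_, fun i => (norm_le_pi_norm a i).trans hanorm⟩
  rw [← hT]
  exact (congrArg Subtype.val ha).symm

section Banach

variable {A : Type*} [NormedCommRing A] [NormedAlgebra ℂ A] {k : ℕ} {t : Fin k → A}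
  {M : Ideal A}

theorem idealPowClosure_le_succ_sup_span_wordMonomial (φ : WeakDual.characterSpace ℂ A)
    (hφ : ∀ a, φ a = 0 ↔ a ∈ M) (hgen : M = Ideal.span (range t)) (n : ℕ) :
    idealPowClosure M n ≤
      idealPowClosure M (n + 1) ⊔ span ℂ (range (wordMonomial t : (Fin n → Fin k) → A)) := by
  have : FiniteDimensional ℂ (span ℂ (range (wordMonomial t : (Fin n → Fin k) → A))) :=
    FiniteDimensional.span_of_finite ℂ (finite_range _)
  refine topologicalClosure_minimal _ ?_
    (isClosed_sup_finiteDimensional _ _ (isClosed_topologicalClosure _))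
  exact (pow_le_pow_succ_sup_span_wordMonomial (WeakDual.CharacterSpace.toAlgHom φ) hφ hgen n).trans
    (sup_le_sup_right (le_topologicalClosure _) _)

theorem disjoint_span_wordMonomial_idealPowClosure_succ (φ : WeakDual.characterSpace ℂ A)
    (hφ : ∀ a, φ a = 0 ↔ a ∈ M) (hgen : M = Ideal.span (range t)) {n : ℕ}
    (hdim : Module.rank ℂ
        (↥(idealPowClosure M n) ⧸
          Submodule.comap (idealPowClosure M n).subtype (idealPowClosure M (n + 1)))
        = ((n + k - 1).choose n : Cardinal)) :
    Disjoint (span ℂ (range (wordMonomial t : (Fin n → Fin k) → A)))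
      (idealPowClosure M (n + 1)) := by
  set F := span ℂ (range (wordMonomial t : (Fin n → Fin k) → A))
  set N := (idealPowClosure M (n + 1)).comap (idealPowClosure M n).subtype
  have ht : ∀ i, t i ∈ M := fun i => hgen ▸ Ideal.subset_span ⟨i, rfl⟩
  have hF : F ≤ idealPowClosure M n :=
    span_le.2 <| range_subset_iff.2 fun w => le_topologicalClosure _ (wordMonomial_mem_pow ht w)
  let f : F →ₗ[ℂ] idealPowClosure M n ⧸ N := N.mkQ ∘ₗ inclusion hF
  have hsurj : Function.Surjective f := by
    intro q
    obtain ⟨y, rfl⟩ := N.mkQ_surjective q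
    obtain ⟨b, hb, a, ha, hy⟩ :=
      mem_sup.1 (idealPowClosure_le_succ_sup_span_wordMonomial φ hφ hgen n y.2)
    refine ⟨⟨a, ha⟩, (Submodule.Quotient.eq N).2 ?_⟩
    simpa [N, ← hy] using neg_mem hb
  have : FiniteDimensional ℂ F := FiniteDimensional.span_of_finite ℂ (finite_range _)
  have : FiniteDimensional ℂ (idealPowClosure M n ⧸ N) := Module.finite_of_rank_eq_nat hdim
  have hrank : Module.finrank ℂ F = Module.finrank ℂ (idealPowClosure M n ⧸ N) :=
    le_antisymm
      ((finrank_span_wordMonomial_le_choose ℂ t n).trans (Module.finrank_eq_of_rank_eq hdim).ge)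
      (LinearMap.finrank_range_le f |>.trans_eq' <| by
        rw [LinearMap.range_eq_top.2 hsurj, finrank_top])
  have hinj := (LinearMap.injective_iff_surjective_of_finrank_eq_finrank hrank).2 hsurj
  refine disjoint_def.2 fun z hzF hzN => ?_
  have : f ⟨z, hzF⟩ = f 0 := by simpa [f, N] using hzN
  simpa using hinj this

theorem sum_wordMonomial_mul_eq_sum_mul_sub_smul_one (φ : WeakDual.characterSpace ℂ A)
    (hφ : ∀ a, φ a = 0 ↔ a ∈ M) (ht : ∀ i, t i ∈ M) {n : ℕ}
    (hgap : Disjoint (span ℂ (range (wordMonomial t : (Fin n → Fin k) → A)))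
      (idealPowClosure M (n + 1)))
    (G : (Fin n → Fin k) → A) (hG : ∑ w, wordMonomial t w * G w ∈ idealPowClosure M (n + 1)) :
    ∑ w, wordMonomial t w * G w = ∑ w, wordMonomial t w * (G w - φ (G w) • 1) := by
  set R := ∑ w, wordMonomial t w * (G w - φ (G w) • 1)
  have hR : R ∈ M ^ (n + 1) := sum_mem fun w _ => by
    rw [pow_succ]
    exact Ideal.mul_mem_mul (wordMonomial_mem_pow ht w) ((hφ _).1 (by simp))
  have hD : ∑ w, φ (G w) • wordMonomial t w = ∑ w, wordMonomial t w * G w - R := by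
    simp only [R, ← Finset.sum_sub_distrib, mul_sub, mul_smul_comm, mul_one, sub_sub_cancel]
  have hD0 : ∑ w, φ (G w) • wordMonomial t w = 0 := disjoint_def.1 hgap _
    (sum_mem fun w _ => smul_mem _ _ (subset_span ⟨w, rfl⟩))
    (hD ▸ sub_mem hG (le_topologicalClosure _ hR))
  rw [← sub_eq_zero, ← hD, hD0]

theorem exists_wordMonomial_expansion [CompleteSpace A] (φ : WeakDual.characterSpace ℂ A)
    (hφ : ∀ a, φ a = 0 ↔ a ∈ M) (hgen : M = Ideal.span (range t))
    (hgap : ∀ n, 1 ≤ n → Disjoint (span ℂ (range (wordMonomial t : (Fin n → Fin k) → A)))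
      (idealPowClosure M (n + 1))) :
    ∃ B ≥ 0, ∀ x : A, (∀ n, 1 ≤ n → x ∈ closure ((M ^ n : Ideal A) : Set A)) →
      ∀ N, ∃ E : (Fin N → Fin k) → A,
        x = ∑ w, wordMonomial t w * E w ∧ ∀ w, E w ∈ M ∧ ‖E w‖ ≤ B ^ N * ‖x‖ := by
  have ht : ∀ i, t i ∈ M := fun i => hgen ▸ Ideal.subset_span ⟨i, rfl⟩
  have hMclosed : IsClosed (M : Set A) := by
    have : (M : Set A) = φ ⁻¹' {0} := by ext; simp [hφ]
    exact this ▸ isClosed_singleton.preimage (map_continuous φ)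
  obtain ⟨C, hC0, hC⟩ := Ideal.exists_eq_sum_mul_norm_le_of_isClosed (𝕜 := ℂ) (hgen ▸ hMclosed)
  let red : A →L[ℂ] A :=
    ContinuousLinearMap.id ℂ A - (WeakDual.CharacterSpace.toCLM φ).smulRight 1
  have hred : ∀ z, red z = z - φ z • 1 := fun z => by simp [red]
  refine ⟨C * ‖red‖, by positivity, fun x hx N => ?_⟩
  induction N with
  | zero =>
    have hxM : x ∈ M := by simpa [hMclosed.closure_eq] using hx 1 le_rfl
    exact ⟨fun _ => x, by simp [wordMonomial], fun _ => ⟨hxM, by simp⟩⟩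
  | succ N ih =>
    obtain ⟨E, hxE, hE⟩ := ih
    choose g hgE hg using fun w => hC (E w) (hgen ▸ (hE w).1)
    have hx' := hxE.trans (sum_wordMonomial_mul_eq_of_eq_sum_mul t E g hgE)
    refine ⟨fun w => red (g (Fin.tail w) (w 0)), ?_, fun w => ⟨?_, ?_⟩⟩
    · simp only [hred]
      rw [← sum_wordMonomial_mul_eq_sum_mul_sub_smul_one φ hφ ht (hgap (N + 1) (by omega)) _
        (hx' ▸ hx (N + 2) (by omega))]
      exact hx'
    · simp [hred, ← hφ]
    · calc ‖red (g (Fin.tail w) (w 0))‖ ≤ ‖red‖ * ‖g (Fin.tail w) (w 0)‖ := red.le_opNorm _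
        _ ≤ ‖red‖ * (C * ((C * ‖red‖) ^ N * ‖x‖)) := by
          gcongr
          exact (hg _ _).trans (by gcongr; exact (hE _).2)
        _ = (C * ‖red‖) ^ (N + 1) * ‖x‖ := by ring

theorem eventually_forall_norm_apply_lt (φ : WeakDual.characterSpace ℂ A)
    (hφt : ∀ i, φ (t i) = 0) {r : ℝ} (hr : 0 < r) :
    ∀ᶠ ψ in 𝓝 φ, ∀ i, ‖(ψ : WeakDual.characterSpace ℂ A) (t i)‖ < r :=
  eventually_all.2 fun i => by
    have hcont : Continuous fun ψ : WeakDual.characterSpace ℂ A => ‖ψ (t i)‖ :=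
      ((WeakDual.eval_continuous (t i)).comp continuous_subtype_val).norm
    exact (hcont.tendsto' φ 0 (by simp [hφt])).eventually_lt_const hr

end Banach

theorem norm_apply_sum_wordMonomial_mul_le {𝕜 A : Type*} [NontriviallyNormedField 𝕜]
    [NormedCommRing A] [NormedAlgebra 𝕜 A] {k N : ℕ} (t : Fin k → A)
    (ψ : WeakDual.characterSpace 𝕜 A) {r b : ℝ} (hr : ∀ i, ‖ψ (t i)‖ ≤ r)
    (E : (Fin N → Fin k) → A) (hE : ∀ w, ‖E w‖ ≤ b) :
    ‖ψ (∑ w, wordMonomial t w * E w)‖ ≤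
      k ^ N * (r ^ N * (‖WeakDual.CharacterSpace.toCLM ψ‖ * b)) := by
  have hmono : ∀ w : Fin N → Fin k, ‖ψ (wordMonomial t w)‖ ≤ r ^ N := fun w => by
    simpa [wordMonomial] using
      Finset.prod_le_prod (s := Finset.univ) (fun _ _ => norm_nonneg _) fun i _ => hr (w i)
  have hE' : ∀ w, ‖ψ (E w)‖ ≤ ‖WeakDual.CharacterSpace.toCLM ψ‖ * b := fun w =>
    ((WeakDual.CharacterSpace.toCLM ψ).le_opNorm (E w)).trans (by gcongr; exact hE w)
  calc ‖ψ (∑ w, wordMonomial t w * E w)‖ ≤ ∑ w, ‖ψ (wordMonomial t w)‖ * ‖ψ (E w)‖ := by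
        simpa only [map_sum, map_mul, norm_mul] using
          norm_sum_le Finset.univ fun w => ψ (wordMonomial t w * E w)
    _ ≤ ∑ _w : Fin N → Fin k, r ^ N * (‖WeakDual.CharacterSpace.toCLM ψ‖ * b) :=
        Finset.sum_le_sum fun w _ =>
          mul_le_mul (hmono w) (hE' w) (norm_nonneg _) ((norm_nonneg _).trans (hmono w))
    _ = k ^ N * (r ^ N * (‖WeakDual.CharacterSpace.toCLM ψ‖ * b)) := by simp

theorem banach_lemma31_part_iii_general
    {A : Type*} [NormedCommRing A] [NormedAlgebra ℂ A] [CompleteSpace A]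
    (k : ℕ) (t : Fin k → A) (M : Ideal A)
    (hgen : M = Ideal.span (Set.range t))
    (hdim : ∀ n : ℕ, 1 ≤ n →
      Module.rank ℂ
        (↥(idealPowClosure M n) ⧸
          Submodule.comap (idealPowClosure M n).subtype (idealPowClosure M (n + 1)))
        = ((n + k - 1).choose n : Cardinal))
    (φ : WeakDual.characterSpace ℂ A) (hφ : ∀ x : A, φ x = 0 ↔ x ∈ M) :
    ∀ x : A, (∀ n : ℕ, 1 ≤ n → x ∈ closure ((M ^ n : Ideal A) : Set A)) →
      ∃ U ∈ nhds φ, ∀ ψ ∈ U, (ψ : WeakDual.characterSpace ℂ A) x = 0 := by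
  intro x hx
  obtain ⟨B, hB0, hB⟩ := exists_wordMonomial_expansion φ hφ hgen fun n hn =>
    disjoint_span_wordMonomial_idealPowClosure_succ φ hφ hgen (hdim n hn)
  set r : ℝ := (k * B + 1)⁻¹
  have hq : k * r * B < 1 := by
    rw [mul_right_comm, ← div_eq_mul_inv, div_lt_one (by positivity)]
    linarith
  have hφt : ∀ i, φ (t i) = 0 := fun i => (hφ _).2 (hgen ▸ Ideal.subset_span ⟨i, rfl⟩)
  refine ⟨_, eventually_forall_norm_apply_lt φ hφt (show 0 < r by positivity), fun ψ hψ => ?_⟩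
  set c := ‖WeakDual.CharacterSpace.toCLM ψ‖ * ‖x‖
  have hbound : ∀ N : ℕ, ‖ψ x‖ ≤ c * (k * r * B) ^ N := fun N => by
    obtain ⟨E, hxE, hE⟩ := hB x hx N
    calc ‖ψ x‖ = ‖ψ (∑ w, wordMonomial t w * E w)‖ := by rw [← hxE]
      _ ≤ k ^ N * (r ^ N * (‖WeakDual.CharacterSpace.toCLM ψ‖ * (B ^ N * ‖x‖))) :=
          norm_apply_sum_wordMonomial_mul_le t ψ (fun i => (hψ i).le) E fun w => (hE w).2
      _ = c * (k * r * B) ^ N := by ring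
  have hlim : Tendsto (fun N : ℕ => c * (k * r * B) ^ N) atTop (𝓝 0) := by
    simpa using (tendsto_pow_atTop_nhds_zero_of_lt_one (by positivity) hq).const_mul c
  exact norm_le_zero_iff.1 (ge_of_tendsto' hlim hbound)

/-- Lemma 3.1(iii): if a commutative unital complex Banach algebra `A` has a maximal ideal `M`
algebraically generated by `t₁, …, t_k` with `dim (cl(Mⁿ)/cl(Mⁿ⁺¹)) = C(n+k-1, n)` for all
`n ≥ 1`, and `φ` is a character with `ker φ = M`, then for every `x ∈ ⋂_{n≥1} cl(Mⁿ)` the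
Gelfand transform `x̂` vanishes on a neighbourhood of `φ` in the character space. -/
theorem banach_lemma31_part_iii
    {A : Type*} [NormedCommRing A] [NormedAlgebra ℂ A] [CompleteSpace A]
    (k : ℕ) (t : Fin k → A) (M : Ideal A) (hmax : M.IsMaximal)
    (hgen : M = Ideal.span (Set.range t))
    (hdim : ∀ n : ℕ, 1 ≤ n →
      Module.rank ℂ
        (↥(idealPowClosure M n) ⧸
          Submodule.comap (idealPowClosure M n).subtype (idealPowClosure M (n + 1)))
        = ((n + k - 1).choose n : Cardinal))
    (φ : WeakDual.characterSpace ℂ A) (hφ : ∀ x : A, φ x = 0 ↔ x ∈ M) :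
    ∀ x : A, (∀ n : ℕ, 1 ≤ n → x ∈ closure ((M ^ n : Ideal A) : Set A)) →
      ∃ U ∈ nhds φ, ∀ ψ ∈ U, (ψ : WeakDual.characterSpace ℂ A) x = 0 :=
  banach_lemma31_part_iii_general k t M hgen hdim φ hφ
end

section
/- Let A be a commutative unital complex Banach algebra with a maximal ideal M algebraically generated by t_1,…,t_k, with dim_ℂ(cl(M^n)/cl(M^{n+1})) = C(n+k−1,n) for every n ≥ 1, and let φ be a character of A with ker φ = M. Then there exists ε > 0 such that for every character ψ of A with |ψ(t_i)| < ε for all i = 1,…,k, the kernel of ψ is algebraically finitely generated: ker ψ equals the ideal of A generated by the elements t_1 − ψ(t_1)·1, …, t_k − ψ(t_k)·1. -/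
/-!
For a character `ψ` with `ψ sᵢ = 0`, the kernel of `ψ` equals the ideal `(s₁, …, s_k)` exactly
when the bounded operator `(c, a) ↦ c • 1 + ∑ aᵢ sᵢ` from `ℂ × Aᵏ` to `A` is onto. With
`sᵢ = tᵢ - ψ(tᵢ) • 1` this operator depends continuously on `(ψ(tᵢ))ᵢ`, and it is onto at
`φ`, where `ψ(tᵢ) = 0`, because `A = ℂ • 1 + ker φ`. By the open mapping theorem a small
perturbation of a surjective operator between Banach spaces is still surjective, so the operator
stays onto for all `ψ` with `ψ(tᵢ)` small enough.
-/

open Function Set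

namespace ContinuousLinearMap

variable {𝕜 E F : Type*} [NontriviallyNormedField 𝕜] [NormedAddCommGroup E] [NormedSpace 𝕜 E]
  [NormedAddCommGroup F] [NormedSpace 𝕜 F]

theorem approximatesLinearOn (S T : E →L[𝕜] F) (s : Set E) :
    ApproximatesLinearOn S T s ‖S - T‖₊ :=
  ApproximatesLinearOn.approximatesLinearOn_iff_lipschitzOnWith.2 (S - T).lipschitz.lipschitzOnWith

theorem isOpen_setOf_surjective [CompleteSpace E] [CompleteSpace F] :
    IsOpen {T : E →L[𝕜] F | Surjective T} := by
  refine Metric.isOpen_iff.2 fun T hT => ?_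
  let T' := T.nonlinearRightInverseOfSurjective (LinearMap.range_eq_top.2 hT)
  refine ⟨T'.nnnorm⁻¹, by simpa using T.nonlinearRightInverseOfSurjective_nnnorm_pos _, ?_⟩
  intro S hS
  have hST : ‖S - T‖₊ < T'.nnnorm⁻¹ := by
    rwa [Metric.mem_ball, dist_eq_norm, ← coe_nnnorm] at hS
  have himage : S '' univ ∈ nhds (S 0) :=
    (approximatesLinearOn S T univ).image_mem_nhds T' Filter.univ_mem (.inr hST)
  have hrange : LinearMap.range (S : E →ₗ[𝕜] F) = ⊤ := by
    refine Submodule.eq_top_of_nonempty_interior' _ ⟨0, mem_interior_iff_mem_nhds.2 ?_⟩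
    simpa [image_univ, LinearMap.coe_range] using himage
  exact LinearMap.range_eq_top.1 hrange

end ContinuousLinearMap

section UnitAddLinearCombination

variable (𝕜 : Type*) {A ι : Type*} [NontriviallyNormedField 𝕜] [NormedCommRing A]
  [NormedAlgebra 𝕜 A] [Fintype ι]

noncomputable def unitAddLinearCombination (s : ι → A) : 𝕜 × (ι → A) →L[𝕜] A :=
  (ContinuousLinearMap.fst 𝕜 𝕜 (ι → A)).smulRight 1 +
    ∑ i, (ContinuousLinearMap.mul 𝕜 A).flip (s i) ∘L
      ContinuousLinearMap.proj i ∘L ContinuousLinearMap.snd 𝕜 𝕜 (ι → A)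

variable {𝕜}

@[simp]
theorem unitAddLinearCombination_apply (s : ι → A) (x : 𝕜 × (ι → A)) :
    unitAddLinearCombination 𝕜 s x = algebraMap 𝕜 A x.1 + ∑ i, x.2 i * s i := by
  simp [unitAddLinearCombination, Algebra.algebraMap_eq_smul_one, mul_comm]

theorem continuous_unitAddLinearCombination :
    Continuous (unitAddLinearCombination 𝕜 : (ι → A) → 𝕜 × (ι → A) →L[𝕜] A) := by
  unfold unitAddLinearCombination
  fun_prop

variable {F : Type*} [FunLike F A 𝕜] [AlgHomClass F 𝕜 A 𝕜] (ψ : F) {s : ι → A}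

theorem surjective_unitAddLinearCombination (h : RingHom.ker ψ ≤ Ideal.span (range s)) :
    Surjective (unitAddLinearCombination 𝕜 s) := by
  intro y
  have hy : y - algebraMap 𝕜 A (ψ y) ∈ RingHom.ker ψ := by
    simp [RingHom.mem_ker, AlgHomClass.commutes]
  obtain ⟨a, ha⟩ := Ideal.mem_span_range_iff_exists_fun.1 (h hy)
  exact ⟨(ψ y, a), by simp [ha]⟩

theorem ker_eq_span_of_surjective_unitAddLinearCombination (hs : ∀ i, ψ (s i) = 0)
    (h : Surjective (unitAddLinearCombination 𝕜 s)) : RingHom.ker ψ = Ideal.span (range s) := by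
  refine le_antisymm (fun x hx => ?_) (Ideal.span_le.2 <| range_subset_iff.2 hs)
  obtain ⟨⟨c, a⟩, rfl⟩ := h x
  have hc : c = 0 := by simpa [RingHom.mem_ker, AlgHomClass.commutes, hs] using hx
  simp [hc, Ideal.mem_span_range_iff_exists_fun]

end UnitAddLinearCombination

theorem banach_gleason_finitely_generated_kernels_general
    {A : Type*} [NormedCommRing A] [NormedAlgebra ℂ A] [CompleteSpace A]
    (k : ℕ) (t : Fin k → A) (M : Ideal A)
    (hgen : M = Ideal.span (Set.range t))
    (φ : WeakDual.characterSpace ℂ A) (hφ : ∀ x : A, φ x = 0 ↔ x ∈ M) :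
    ∃ ε : ℝ, 0 < ε ∧
      ∀ ψ : WeakDual.characterSpace ℂ A, (∀ i : Fin k, ‖ψ (t i)‖ < ε) →
        RingHom.ker (ψ : A →+* ℂ)
          = Ideal.span (Set.range fun i => t i - algebraMap ℂ A (ψ (t i))) := by
  let shifted (μ : Fin k → ℂ) : Fin k → A := fun i => t i - algebraMap ℂ A (μ i)
  have hshifted : Continuous shifted := by fun_prop
  have hopen : IsOpen {μ | Surjective (unitAddLinearCombination ℂ (shifted μ))} :=
    (ContinuousLinearMap.isOpen_setOf_surjective (𝕜 := ℂ)).preimage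
      (continuous_unitAddLinearCombination.comp hshifted)
  have hzero : Surjective (unitAddLinearCombination ℂ (shifted 0)) := by
    refine surjective_unitAddLinearCombination φ fun x hx => ?_
    simpa [shifted, ← hgen] using (hφ x).1 hx
  obtain ⟨ε, hε, hball⟩ := Metric.isOpen_iff.1 hopen 0 hzero
  refine ⟨ε, hε, fun ψ hψ => ?_⟩
  refine ker_eq_span_of_surjective_unitAddLinearCombination ψ (by simp [AlgHomClass.commutes])
    (hball ?_)
  simpa [pi_norm_lt_iff hε] using hψ

/-- The Gleason-type claim from the proof of Lemma 3.1(iii): under the hypotheses of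
Lemma 3.1 with `ker φ = M`, there is `ε > 0` such that every character `ψ` with
`|ψ(tᵢ)| < ε` for all `i` has algebraically finitely generated kernel, namely
`ker ψ = ⟨t₁ - ψ(t₁)·1, …, t_k - ψ(t_k)·1⟩`. -/
theorem banach_gleason_finitely_generated_kernels
    {A : Type*} [NormedCommRing A] [NormedAlgebra ℂ A] [CompleteSpace A]
    (k : ℕ) (t : Fin k → A) (M : Ideal A) (hmax : M.IsMaximal)
    (hgen : M = Ideal.span (Set.range t))
    (hdim : ∀ n : ℕ, 1 ≤ n →
      Module.rank ℂ
        (↥(idealPowClosure M n) ⧸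
          Submodule.comap (idealPowClosure M n).subtype (idealPowClosure M (n + 1)))
        = ((n + k - 1).choose n : Cardinal))
    (φ : WeakDual.characterSpace ℂ A) (hφ : ∀ x : A, φ x = 0 ↔ x ∈ M) :
    ∃ ε : ℝ, 0 < ε ∧
      ∀ ψ : WeakDual.characterSpace ℂ A, (∀ i : Fin k, ‖ψ (t i)‖ < ε) →
        RingHom.ker (ψ : A →+* ℂ)
          = Ideal.span (Set.range fun i => t i - algebraMap ℂ A (ψ (t i))) :=
  banach_gleason_finitely_generated_kernels_general k t M hgen φ hφ
end

section
/- Let A be a Fréchet algebra and M a closed maximal ideal of A such that ⋂_{n≥1} cl(M^n) = {0} and dim_ℂ(cl(M^n)/cl(M^{n+1})) = C(n+k−1,n) for every n ≥ 1. Then there exist t_1,…,t_k ∈ M such that for every n ≥ 1, cl(M^n) is the (internal, algebraic) direct sum of cl(M^{n+1}) and the linear span of the monomials {t^I : |I| = n}; equivalently, the cosets of the monomials {t^I : |I| = n} form a basis of cl(M^n)/cl(M^{n+1}). -/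
/-- The `ℂ`-linear span of the monomials `t^I` with `|I| = n`. -/
def monomialSpan {A : Type*} [CommRing A] [Algebra ℂ A] {k : ℕ}
    (t : Fin k → A) (n : ℕ) : Submodule ℂ A :=
  Submodule.span ℂ {x : A | ∃ I : Fin k →₀ ℕ, (I.sum fun _ e => e) = n ∧ x = ∏ i, t i ^ I i}

open Module

namespace Submodule

section LinearAlgebra

variable {K E : Type*} [DivisionRing K] [AddCommGroup E] [Module K E]

theorem sup_map_subtype_eq_of_comap_sup_eq_top {N₁ N₂ : Submodule K E} (hle : N₂ ≤ N₁)
    {U : Submodule K N₁} (h : comap N₁.subtype N₂ ⊔ U = ⊤) :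
    N₂ ⊔ U.map N₁.subtype = N₁ := by
  simpa [map_sup, map_comap_subtype, inf_eq_right.2 hle] using congrArg (map N₁.subtype) h

theorem exists_sup_span_range_eq {N₁ N₂ : Submodule K E} (hle : N₂ ≤ N₁) {k : ℕ}
    [FiniteDimensional K (N₁ ⧸ comap N₁.subtype N₂)]
    (hk : finrank K (N₁ ⧸ comap N₁.subtype N₂) = k) :
    ∃ t : Fin k → E, N₂ ⊔ span K (Set.range t) = N₁ := by
  let b := finBasisOfFinrankEq K _ hk
  choose x hx using fun i ↦ (comap N₁.subtype N₂).mkQ_surjective (b i)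
  refine ⟨fun i ↦ x i, ?_⟩
  have hspan : comap N₁.subtype N₂ ⊔ span K (Set.range x) = ⊤ := by
    rw [← map_mkQ_eq_top, map_span, ← Set.range_comp, show _ ∘ x = b from funext hx,
      b.span_eq]
  simpa [map_span, ← Set.range_comp, Function.comp_def] using
    sup_map_subtype_eq_of_comap_sup_eq_top hle hspan

theorem disjoint_of_finrank_le {N S : Submodule K E} [FiniteDimensional K S]
    (h : finrank K S ≤ finrank K ((N ⊔ S : Submodule K E) ⧸ comap (N ⊔ S).subtype N)) :
    Disjoint N S := by
  rw [sup_comm] at h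
  rw [disjoint_comm, disjoint_iff_comap_eq_bot, ← finrank_eq_zero]
  have hq := (comap S.subtype N).finrank_quotient_add_finrank
  have he := (LinearMap.quotientInfEquivSupQuotient S N).finrank_eq
  rw [comap_subtype_self, top_inf_eq] at he
  omega

end LinearAlgebra

section Topology

variable {𝕜 E : Type*} [NontriviallyNormedField 𝕜] [CompleteSpace 𝕜] [AddCommGroup E]
  [TopologicalSpace E] [IsTopologicalAddGroup E] [Module 𝕜 E] [ContinuousSMul 𝕜 E]

theorem sup_eq_top_of_dense {N S : Submodule 𝕜 E} [FiniteDimensional 𝕜 (E ⧸ N)]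
    (hN : IsClosed (N : Set E)) (hS : Dense (S : Set E)) : N ⊔ S = ⊤ := by
  have hclosed := isClosed_mono_of_finiteDimensional_quotient hN (le_sup_left : N ≤ N ⊔ S)
  refine eq_top_iff.2 fun x _ ↦ ?_
  exact hclosed.closure_subset_iff.2 (le_sup_right : S ≤ N ⊔ S)
    (hS.closure_eq ▸ Set.mem_univ x)

theorem sup_eq_of_le_topologicalClosure {N₁ N₂ S : Submodule 𝕜 E} (hle : N₂ ≤ N₁)
    (hN₂ : IsClosed (N₂ : Set E)) [FiniteDimensional 𝕜 (N₁ ⧸ comap N₁.subtype N₂)]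
    (hS : S ≤ N₁) (hdense : N₁ ≤ S.topologicalClosure) : N₂ ⊔ S = N₁ := by
  have : IsClosed (comap N₁.subtype N₂ : Set N₁) := hN₂.preimage continuous_subtype_val
  have hS' : Dense (comap N₁.subtype S : Set N₁) := by
    rw [Topology.IsInducing.subtypeVal.dense_iff]
    rintro ⟨x, hx⟩
    have hx' : x ∈ (S.topologicalClosure : Set E) := hdense hx
    rwa [topologicalClosure_coe, ← Set.inter_eq_right.2 hS,
      ← Subtype.image_preimage_coe] at hx'
  simpa [map_comap_subtype, inf_eq_right.2 hS] using
    sup_map_subtype_eq_of_comap_sup_eq_top hle (sup_eq_top_of_dense this hS')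

end Topology

end Submodule

section MonomialSpan

open Finset

variable {A : Type*} [CommRing A] [Algebra ℂ A] {k : ℕ} (t : Fin k → A)

theorem monomialSpan_mul_le (m n : ℕ) :
    monomialSpan t m * monomialSpan t n ≤ monomialSpan t (m + n) := by
  rw [monomialSpan, monomialSpan, Submodule.span_mul_span, Submodule.span_le]
  rintro _ ⟨_, ⟨I, rfl, rfl⟩, _, ⟨J, rfl, rfl⟩, rfl⟩
  refine Submodule.subset_span
    ⟨I + J, Finsupp.sum_add_index' (fun _ ↦ rfl) fun _ _ _ ↦ rfl, ?_⟩
  simp [pow_add, prod_mul_distrib]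

theorem span_range_le_monomialSpan_one :
    Submodule.span ℂ (Set.range t) ≤ monomialSpan t 1 := by
  classical
  rw [Submodule.span_le]
  rintro _ ⟨i, rfl⟩
  exact Submodule.subset_span ⟨Finsupp.single i 1, Finsupp.sum_single_index rfl,
    by simp [Finsupp.single_apply, pow_ite]⟩

theorem monomialSpan_le_pow {M : Ideal A} (ht : ∀ i, t i ∈ M) (n : ℕ) :
    monomialSpan t n ≤ (M ^ n).restrictScalars ℂ := by
  rw [monomialSpan, Submodule.span_le]
  rintro _ ⟨I, rfl, rfl⟩
  rw [Finsupp.sum_fintype _ _ fun _ ↦ rfl, ← prod_pow_eq_pow_sum]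
  exact Ideal.prod_mem_prod fun i _ ↦ Ideal.pow_mem_pow (ht i) _

theorem monomialSpan_eq_span_finset [DecidableEq A] (n : ℕ) :
    monomialSpan t n = Submodule.span ℂ
      ↑((univ.finsuppAntidiag n).image fun I : Fin k →₀ ℕ ↦ ∏ i, t i ^ I i) := by
  rw [monomialSpan]
  congr 1
  ext x
  simp only [Set.mem_ofPred_eq, coe_image, Set.mem_image, mem_coe, mem_finsuppAntidiag',
    subset_univ, and_true]
  exact exists_congr fun I ↦ and_congr_right fun _ ↦ eq_comm

instance (n : ℕ) : FiniteDimensional ℂ (monomialSpan t n) := by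
  classical
  rw [monomialSpan_eq_span_finset]
  infer_instance

theorem finrank_monomialSpan_le (n : ℕ) :
    finrank ℂ (monomialSpan t n) ≤ (n + k - 1).choose n := by
  classical
  rw [monomialSpan_eq_span_finset]
  refine (finrank_span_finset_le_card _).trans (card_image_le.trans_eq ?_)
  rw [card_finsuppAntidiag_nat_eq_choose, card_univ, Fintype.card_fin, add_comm k]

end MonomialSpan

section IdealPowClosure

variable {A : Type*} [CommRing A] [Algebra ℂ A] [TopologicalSpace A] [ContinuousAdd A]
  [ContinuousConstSMul ℂ A] (M : Ideal A)

theorem isClosed_idealPowClosure (n : ℕ) : IsClosed (idealPowClosure M n : Set A) :=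
  Submodule.isClosed_topologicalClosure _

theorem pow_le_idealPowClosure (n : ℕ) : (M ^ n).restrictScalars ℂ ≤ idealPowClosure M n :=
  Submodule.le_topologicalClosure _

theorem idealPowClosure_antitone : Antitone (idealPowClosure M) :=
  fun _ _ h ↦ Submodule.topologicalClosure_mono fun _ hx ↦ Ideal.pow_le_pow_right h hx

variable {M}

theorem idealPowClosure_one (hM : IsClosed (M : Set A)) :
    idealPowClosure M 1 = M.restrictScalars ℂ :=
  SetLike.coe_injective <| by
    rw [idealPowClosure, Submodule.topologicalClosure_coe, pow_one]
    exact hM.closure_eq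

theorem mul_mem_idealPowClosure [ContinuousMul A] {i j : ℕ} {a x : A} (ha : a ∈ M ^ i)
    (hx : x ∈ idealPowClosure M j) : a * x ∈ idealPowClosure M (i + j) := by
  refine closure_minimal (fun y hy ↦ ?_)
    ((isClosed_idealPowClosure M _).preimage (continuous_const_mul a)) hx
  exact pow_le_idealPowClosure M _ (pow_add M i j ▸ Ideal.mul_mem_mul ha hy)

theorem pow_le_idealPowClosure_sup_monomialSpan [ContinuousMul A] {k : ℕ} {t : Fin k → A}
    (ht : ∀ i, t i ∈ M)
    (hM : M.restrictScalars ℂ ≤ idealPowClosure M 2 ⊔ monomialSpan t 1)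
    {n : ℕ} (hn : 1 ≤ n) :
    (M ^ n).restrictScalars ℂ ≤ idealPowClosure M (n + 1) ⊔ monomialSpan t n := by
  induction n, hn using Nat.le_induction with
  | base => simpa using hM
  | succ n hn ih =>
    intro y hy
    rw [Submodule.restrictScalars_mem, pow_succ] at hy
    refine Submodule.mul_induction_on hy (fun a ha b hb ↦ ?_) fun _ _ ↦ add_mem
    obtain ⟨w, hw, z, hz, rfl⟩ := Submodule.mem_sup.1 (ih ha)
    obtain ⟨u, hu, s, hs, rfl⟩ := Submodule.mem_sup.1 (hM hb)
    have hsM : s ∈ M ^ 1 := by simpa using monomialSpan_le_pow t ht 1 hs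
    have hau : (w + z) * u ∈ idealPowClosure M (n + 1 + 1) := by
      simpa using mul_mem_idealPowClosure ha hu
    have hsw : s * w ∈ idealPowClosure M (n + 1 + 1) := by
      simpa [add_comm 1] using mul_mem_idealPowClosure hsM hw
    have hzs : z * s ∈ monomialSpan t (n + 1) :=
      monomialSpan_mul_le t n 1 (Submodule.mul_mem_mul hz hs)
    have hsplit : (w + z) * (u + s) = (w + z) * u + s * w + z * s := by ring
    rw [hsplit]
    exact add_mem (add_mem (Submodule.mem_sup_left hau) (Submodule.mem_sup_left hsw))
      (Submodule.mem_sup_right hzs)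

end IdealPowClosure

theorem idealPowClosure_eq_sup_monomialSpan {A : Type*} [CommRing A] [Algebra ℂ A]
    [TopologicalSpace A] [IsTopologicalAddGroup A] [ContinuousSMul ℂ A] [ContinuousMul A]
    {M : Ideal A} {k : ℕ} {t : Fin k → A} (ht : ∀ i, t i ∈ M)
    (hM : M.restrictScalars ℂ ≤ idealPowClosure M 2 ⊔ monomialSpan t 1)
    {n : ℕ} (hn : 1 ≤ n)
    [FiniteDimensional ℂ (idealPowClosure M n ⧸
      Submodule.comap (idealPowClosure M n).subtype (idealPowClosure M (n + 1)))] :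
    idealPowClosure M n = idealPowClosure M (n + 1) ⊔ monomialSpan t n := by
  have hle := idealPowClosure_antitone M n.le_succ
  have hpow := Submodule.sup_eq_of_le_topologicalClosure hle (isClosed_idealPowClosure M _)
    (pow_le_idealPowClosure M n) le_rfl
  refine le_antisymm ?_ (sup_le hle ((monomialSpan_le_pow t ht n).trans
    (pow_le_idealPowClosure M n)))
  conv_lhs => rw [← hpow]
  exact sup_le le_sup_left (pow_le_idealPowClosure_sup_monomialSpan ht hM hn)

theorem frechet_proposition23_first_half_general
    {A : Type*} [CommRing A] [Algebra ℂ A] [UniformSpace A] [IsUniformAddGroup A]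
    [ContinuousMul A] [ContinuousSMul ℂ A]
    (k : ℕ) (M : Ideal A) (hclosed : IsClosed (M : Set A))
    (hdim : ∀ n : ℕ, 1 ≤ n →
      Module.rank ℂ
        (↥(idealPowClosure M n) ⧸
          Submodule.comap (idealPowClosure M n).subtype (idealPowClosure M (n + 1)))
        = ((n + k - 1).choose n : Cardinal)) :
    ∃ t : Fin k → A, (∀ i, t i ∈ M) ∧
      ∀ n : ℕ, 1 ≤ n →
        idealPowClosure M n = idealPowClosure M (n + 1) ⊔ monomialSpan t n ∧
        idealPowClosure M (n + 1) ⊓ monomialSpan t n = ⊥ := by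
  have hfin (n : ℕ) (hn : 1 ≤ n) := FiniteDimensional.of_rank_eq_nat (hdim n hn)
  have hfinrank (n : ℕ) (hn : 1 ≤ n) := finrank_eq_of_rank_eq (hdim n hn)
  have := hfin 1 le_rfl
  obtain ⟨t, ht⟩ := Submodule.exists_sup_span_range_eq (idealPowClosure_antitone M one_le_two)
    ((hfinrank 1 le_rfl).trans (by simp : (1 + k - 1).choose 1 = k))
  rw [idealPowClosure_one hclosed] at ht
  have htM (i : Fin k) : t i ∈ M :=
    ht.le (Submodule.mem_sup_right (Submodule.subset_span ⟨i, rfl⟩))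
  have hM : M.restrictScalars ℂ ≤ idealPowClosure M 2 ⊔ monomialSpan t 1 :=
    ht.ge.trans (sup_le_sup_left (span_range_le_monomialSpan_one t) _)
  refine ⟨t, htM, fun n hn ↦ ?_⟩
  have := hfin n hn
  have hsup := idealPowClosure_eq_sup_monomialSpan htM hM hn
  refine ⟨hsup, disjoint_iff.1 (Submodule.disjoint_of_finrank_le ?_)⟩
  rw [← hsup, hfinrank n hn]
  exact finrank_monomialSpan_le t n

/-- Proposition 2.3 (first half): if `M` is a closed maximal ideal of a Fréchet algebra `A`
with `⋂_{n≥1} cl(Mⁿ) = {0}` and `dim (cl(Mⁿ)/cl(Mⁿ⁺¹)) = C(n+k-1, n)` for all `n ≥ 1`, then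
there are `t₁, …, t_k ∈ M` such that for every `n ≥ 1` the closed subspace `cl(Mⁿ)` is the
internal direct sum of `cl(Mⁿ⁺¹)` and the linear span of the monomials `{t^I : |I| = n}`. -/
theorem frechet_proposition23_first_half
    {A : Type*} [CommRing A] [Algebra ℂ A] [UniformSpace A] [IsUniformAddGroup A]
    [ContinuousMul A] [ContinuousSMul ℂ A] [CompleteSpace A]
    (p : ℕ → Seminorm ℂ A) (hmono : Monotone p)
    (hsubmul : ∀ (m : ℕ) (x y : A), p m (x * y) ≤ p m x * p m y)
    (hws : WithSeminorms p)
    (k : ℕ) (M : Ideal A) (hclosed : IsClosed (M : Set A)) (hmax : M.IsMaximal)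
    (hcap : (⨅ n : ℕ, idealPowClosure M (n + 1)) = ⊥)
    (hdim : ∀ n : ℕ, 1 ≤ n →
      Module.rank ℂ
        (↥(idealPowClosure M n) ⧸
          Submodule.comap (idealPowClosure M n).subtype (idealPowClosure M (n + 1)))
        = ((n + k - 1).choose n : Cardinal)) :
    ∃ t : Fin k → A, (∀ i, t i ∈ M) ∧
      ∀ n : ℕ, 1 ≤ n →
        idealPowClosure M n = idealPowClosure M (n + 1) ⊔ monomialSpan t n ∧
        idealPowClosure M (n + 1) ⊓ monomialSpan t n = ⊥ :=
  frechet_proposition23_first_half_general k M hclosed hdim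
end
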